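/- arXiv:2006.09697 — 2 statements merged into one kernel-verified Lean document; each statement's English description precedes it below -/
import Mathlib

section
/- For all integers N ≥ 1 and k ≥ 0, every i ∈ {1,…,N} and every integer v with 0 ≤ v ≤ k, in the Pólya urn model with N colours and k draws one has P(X_i ≥ v) ≤ 2·exp(−(N−2)·v/(k+N)). -/
attribute [local instance] Classical.propDecidable

/-- The set of colour-count vectors of the Pólya urn with `N` colours and `k` draws:
all `(v_1, …, v_N) ∈ ℤ_{≥0}^N` with `v_1 + ⋯ + v_N = k`.  The colour-count vector
`(X_1, …, X_N)` is uniformly distributed on this set. -/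
def urnSet (N k : ℕ) : Finset (Fin N → ℕ) :=
  (Fintype.piFinset fun _ => Finset.range (k + 1)).filter fun v => ∑ i, v i = k

/-- The probability, in the Pólya urn model with `N` colours and `k` draws, that the
colour-count vector `(X_1, …, X_N)` satisfies the predicate `p`, expressed as a
counting ratio over the uniform distribution on `urnSet N k`. -/
noncomputable def urnProb (N k : ℕ) (p : (Fin N → ℕ) → Prop) : ℝ :=
  ((urnSet N k).filter p).card / (urnSet N k).card

lemma mem_urnSet {N k : ℕ} {x : Fin N → ℕ} : x ∈ urnSet N k ↔ ∑ j, x j = k := by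
  unfold urnSet
  simp only [Finset.mem_filter, Fintype.mem_piFinset, Finset.mem_range]
  constructor
  · rintro ⟨-, h⟩; exact h
  · intro h
    refine ⟨fun i => ?_, h⟩
    have := Finset.single_le_sum (f := x) (fun j _ => Nat.zero_le _) (Finset.mem_univ i)
    rw [h] at this; omega

lemma urnSet_card (N k : ℕ) : (urnSet N k).card = (N + k - 1).choose k := by
  have : urnSet N k = Finset.piAntidiag Finset.univ k := by
    ext x
    simp only [mem_urnSet, Finset.mem_piAntidiag, Finset.mem_univ, imp_true_iff, and_true]
  rw [this, ← Finset.map_sym_eq_piAntidiag, Finset.card_map, Finset.sym_univ,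
    Finset.card_univ, Sym.card_sym_eq_choose, Fintype.card_fin]

lemma urn_filter_card (N k : ℕ) (i : Fin N) (v : ℕ) (hv : v ≤ k)
    {inst : DecidablePred fun x : Fin N → ℕ => v ≤ x i} :
    ((urnSet N k).filter fun x => v ≤ x i).card = (urnSet N (k - v)).card := by
  refine Finset.card_bij' (fun x _ => Function.update x i (x i - v))
    (fun y _ => Function.update y i (y i + v)) ?hi ?hj ?left ?right
  case hi =>
    rintro x hx
    rw [Finset.mem_filter, mem_urnSet] at hx
    obtain ⟨hs, hvi⟩ := hx
    rw [mem_urnSet, Finset.sum_update_of_mem (Finset.mem_univ i)]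
    have := Finset.add_sum_erase Finset.univ x (Finset.mem_univ i)
    rw [hs] at this
    rw [Finset.sdiff_singleton_eq_erase]
    omega
  case hj =>
    rintro y hy
    rw [mem_urnSet] at hy
    rw [Finset.mem_filter, mem_urnSet]
    constructor
    · rw [Finset.sum_update_of_mem (Finset.mem_univ i)]
      have := Finset.add_sum_erase Finset.univ y (Finset.mem_univ i)
      rw [hy] at this
      rw [Finset.sdiff_singleton_eq_erase]
      omega
    · simp
  case left =>
    rintro x hx
    rw [Finset.mem_filter] at hx
    funext j
    rcases eq_or_ne j i with rfl | hne
    · simp only [Function.update_self]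
      omega
    · simp [Function.update_of_ne hne]
  case right =>
    rintro y hy
    funext j
    rcases eq_or_ne j i with rfl | hne
    · simp [Function.update_self]
    · simp [Function.update_of_ne hne]

lemma choose_ratio : ∀ (m a b : ℕ), a ≤ b →
    (((a + m).choose m : ℝ)) / ((b + m).choose m) ≤ (((a : ℝ) + m + 1) / ((b : ℝ) + m + 1)) ^ m := by
  intro m
  induction m with
  | zero => intro a b _; simp
  | succ m ih =>
    intro a b hab
    have hab' : (a : ℝ) ≤ b := by exact_mod_cast hab
    have key : ∀ c : ℕ, ((c + (m + 1)).choose (m + 1) : ℝ)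
        = ((c : ℝ) + m + 1) * ((c + m).choose m) / ((m : ℝ) + 1) := by
      intro c
      have h := Nat.add_one_mul_choose_eq (c + m) m
      have h2 : ((c : ℝ) + m + 1) * ((c + m).choose m)
          = (((c + (m + 1)).choose (m + 1) : ℝ)) * ((m : ℝ) + 1) := by
        exact_mod_cast congrArg (Nat.cast : ℕ → ℝ) h
      have hm : ((m : ℝ) + 1) ≠ 0 := by positivity
      field_simp
      linarith [h2]
    have hCb : (0 : ℝ) < ((b + m).choose m : ℝ) := by
      exact_mod_cast Nat.choose_pos (Nat.le_add_left m b)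
    have hb1 : (0 : ℝ) < (b : ℝ) + m + 1 := by positivity
    have e : (((a + (m + 1)).choose (m + 1) : ℝ)) / ((b + (m + 1)).choose (m + 1))
        = ((((a + m).choose m : ℝ)) / ((b + m).choose m))
          * (((a : ℝ) + m + 1) / ((b : ℝ) + m + 1)) := by
      rw [key a, key b]
      have hm : ((m : ℝ) + 1) ≠ 0 := by positivity
      field_simp
    rw [e]
    have hq0 : (0 : ℝ) ≤ ((a : ℝ) + m + 1) / ((b : ℝ) + m + 1) := by positivity
    calc ((((a + m).choose m : ℝ)) / ((b + m).choose m))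
          * (((a : ℝ) + m + 1) / ((b : ℝ) + m + 1))
        ≤ (((a : ℝ) + m + 1) / ((b : ℝ) + m + 1)) ^ m
          * (((a : ℝ) + m + 1) / ((b : ℝ) + m + 1)) :=
          mul_le_mul_of_nonneg_right (ih a b hab) hq0
      _ = (((a : ℝ) + m + 1) / ((b : ℝ) + m + 1)) ^ (m + 1) := (pow_succ _ m).symm
      _ ≤ (((a : ℝ) + (m + 1 : ℕ) + 1) / ((b : ℝ) + (m + 1 : ℕ) + 1)) ^ (m + 1) := by
          apply pow_le_pow_left₀ hq0
          push_cast
          rw [div_le_div_iff₀ hb1 (by positivity)]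
          nlinarith

lemma urnProb_eq (N k : ℕ) (p : (Fin N → ℕ) → Prop) [DecidablePred p] :
    urnProb N k p = ((urnSet N k).filter p).card / (urnSet N k).card := by
  unfold urnProb
  rw [Finset.filter_congr_decidable]

theorem polya_upper_tail_upper_bound (N k : ℕ) (hN : 1 ≤ N) (i : Fin N) (v : ℕ)
    (hv : v ≤ k) :
    urnProb N k (fun x => v ≤ x i) ≤
      2 * Real.exp (-(((N : ℝ) - 2) * v) / ((k : ℝ) + N)) := by
  obtain ⟨m, hmdef⟩ : ∃ m, N = m + 1 := ⟨N - 1, by omega⟩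
  rw [urnProb_eq N k (fun x => v ≤ x i), urn_filter_card N k i v hv,
    urnSet_card, urnSet_card]
  have e3 : (N + (k - v) - 1).choose (k - v) = ((k - v) + m).choose m := by
    have h1 : N + (k - v) - 1 = (k - v) + m := by omega
    rw [h1, ← Nat.choose_symm (Nat.le_add_left m (k - v))]
    congr 1; omega
  have e4 : (N + k - 1).choose k = (k + m).choose m := by
    have h1 : N + k - 1 = k + m := by omega
    rw [h1, ← Nat.choose_symm (Nat.le_add_left m k)]
    congr 1; omega
  rw [e3, e4]
  refine le_trans (choose_ratio m (k - v) k (Nat.sub_le k v)) ?_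
  have hN1 : (1 : ℝ) ≤ N := by exact_mod_cast hN
  have hT : (0 : ℝ) < (k : ℝ) + N := by linarith [Nat.cast_nonneg (α := ℝ) k]
  set t : ℝ := (v : ℝ) / ((k : ℝ) + N) with ht
  have hcast : ((k - v : ℕ) : ℝ) = (k : ℝ) - v := Nat.cast_sub hv
  have hmcast : ((m : ℝ)) = (N : ℝ) - 1 := by
    have : (N : ℝ) = (m : ℝ) + 1 := by exact_mod_cast hmdef
    linarith
  have hbase : (((k - v : ℕ) : ℝ) + m + 1) / ((k : ℝ) + m + 1) = 1 - t := by
    rw [hcast, hmcast, ht]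
    have h1 : (k : ℝ) + ((N : ℝ) - 1) + 1 = (k : ℝ) + N := by ring
    rw [h1, div_eq_iff hT.ne', sub_mul, one_mul, div_mul_cancel₀ _ hT.ne']
    ring
  rw [hbase]
  have hvk : (v : ℝ) ≤ k := by exact_mod_cast hv
  have ht0 : 0 ≤ t := by positivity
  have ht1 : 0 ≤ 1 - t := by
    rw [ht, sub_nonneg, div_le_one hT]
    linarith
  have hexp : Real.exp (-((m : ℝ) * t)) ≤ Real.exp (-(((N : ℝ) - 2) * v) / ((k : ℝ) + N)) := by
    apply Real.exp_le_exp.2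
    have : -(((N : ℝ) - 2) * v) / ((k : ℝ) + N) = -(((N : ℝ) - 2) * t) := by
      rw [ht]; ring
    rw [this, hmcast]
    nlinarith
  calc (1 - t) ^ m ≤ (Real.exp (-t)) ^ m := by
        apply pow_le_pow_left₀ ht1
        linarith [Real.add_one_le_exp (-t)]
    _ = Real.exp (-((m : ℝ) * t)) := by
        rw [← Real.exp_nat_mul]; ring_nf
    _ ≤ Real.exp (-(((N : ℝ) - 2) * v) / ((k : ℝ) + N)) := hexp
    _ ≤ 2 * Real.exp (-(((N : ℝ) - 2) * v) / ((k : ℝ) + N)) := by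
        nlinarith [Real.exp_pos (-(((N : ℝ) - 2) * v) / ((k : ℝ) + N))]
end

section
/- For all integers N ≥ 1 and k ≥ 8N, every i ∈ {1,…,N} and every integer v with 0 ≤ v ≤ k/2, in the Pólya urn model with N colours and k draws one has P(X_i ≤ v) ≤ exp(−(1/64)·exp(−2·N·v/k)). -/
attribute [local instance] Classical.propDecidable

lemma mem_urnSet_iff {N k : ℕ} {x : Fin N → ℕ} : x ∈ urnSet N k ↔ ∑ i, x i = k := by
  constructor
  · intro hx
    exact (Finset.mem_filter.mp hx).2
  · intro hx
    refine Finset.mem_filter.mpr ⟨Fintype.mem_piFinset.mpr fun j => ?_, hx⟩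
    refine Finset.mem_range.mpr (Nat.lt_succ_of_le ?_)
    have h := Finset.single_le_sum (f := x) (fun t _ => Nat.zero_le (x t)) (Finset.mem_univ j)
    omega

lemma card_urnSet (N k : ℕ) : (urnSet N k).card = Nat.multichoose N k := by
  rw [← Fintype.card_coe]
  have e1 : ↥(urnSet N k) ≃ {P : Fin N → ℕ // ∑ i, P i = k} :=
    Equiv.subtypeEquivRight fun x => mem_urnSet_iff
  have e2 := Sym.equivNatSumOfFintype (Fin N) k
  rw [Fintype.card_congr (e1.trans e2.symm), Sym.card_sym_eq_multichoose, Fintype.card_fin]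

lemma card_urnSet' (N k : ℕ) (hN : 1 ≤ N) :
    (urnSet N k).card = (k + (N - 1)).choose (N - 1) := by
  rw [card_urnSet, Nat.multichoose_eq]
  have h1 : N + k - 1 = k + (N - 1) := by omega
  rw [h1, Nat.choose_symm_add]

lemma choose_ratio_aux (r : ℕ) :
    ∀ m n : ℕ, m ≤ n → (n + r).choose r * (m + 1) ^ r ≤ (m + r).choose r * (n + 1) ^ r := by
  induction r with
  | zero => simp
  | succ r ih =>
    intro m n h
    have ih' := ih m n h
    refine Nat.le_of_mul_le_mul_left ?_ (Nat.succ_pos r)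
    have h1 : (n + r + 1) * (n + r).choose r = (n + (r + 1)).choose (r + 1) * (r + 1) := by
      have := Nat.add_one_mul_choose_eq (n + r) r
      simpa [Nat.succ_eq_add_one, Nat.add_assoc] using this
    have h2 : (m + r + 1) * (m + r).choose r = (m + (r + 1)).choose (r + 1) * (r + 1) := by
      have := Nat.add_one_mul_choose_eq (m + r) r
      simpa [Nat.succ_eq_add_one, Nat.add_assoc] using this
    have key : (n + r + 1) * (m + 1) ≤ (m + r + 1) * (n + 1) := by nlinarith
    calc (r + 1) * ((n + (r + 1)).choose (r + 1) * (m + 1) ^ (r + 1))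
        = ((n + (r + 1)).choose (r + 1) * (r + 1)) * ((m + 1) ^ r * (m + 1)) := by
          rw [pow_succ]; ring
      _ = ((n + r + 1) * (n + r).choose r) * ((m + 1) ^ r * (m + 1)) := by rw [← h1]
      _ = ((n + r + 1) * (m + 1)) * ((n + r).choose r * (m + 1) ^ r) := by ring
      _ ≤ ((m + r + 1) * (n + 1)) * ((m + r).choose r * (n + 1) ^ r) :=
          Nat.mul_le_mul key ih'
      _ = ((m + r + 1) * (m + r).choose r) * ((n + 1) ^ r * (n + 1)) := by ring
      _ = ((m + (r + 1)).choose (r + 1) * (r + 1)) * ((n + 1) ^ r * (n + 1)) := by rw [← h2]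
      _ = (r + 1) * ((m + (r + 1)).choose (r + 1) * (n + 1) ^ (r + 1)) := by
          rw [pow_succ]; ring

lemma card_filter_ge (N k c : ℕ) (hc : c ≤ k) (i : Fin N) :
    ((urnSet N k).filter fun x => c ≤ x i).card = (urnSet N (k - c)).card := by
  refine Finset.card_bij' (fun x _ => Function.update x i (x i - c))
    (fun y _ => Function.update y i (y i + c)) ?_ ?_ ?_ ?_
  · intro x hx
    obtain ⟨hx1, hx2⟩ := Finset.mem_filter.mp hx
    have hsum := mem_urnSet_iff.mp hx1
    refine mem_urnSet_iff.mpr ?_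
    have h1 := Finset.sum_update_of_mem (Finset.mem_univ i) x (x i - c)
    have h2 : ∑ j, x j = x i + ∑ j ∈ Finset.univ \ {i}, x j :=
      Finset.sum_eq_add_sum_sdiff_singleton_of_mem (Finset.mem_univ i) x
    beta_reduce at *
    omega
  · intro y hy
    have hsum := mem_urnSet_iff.mp hy
    refine Finset.mem_filter.mpr ⟨mem_urnSet_iff.mpr ?_, by simp⟩
    have h1 := Finset.sum_update_of_mem (Finset.mem_univ i) y (y i + c)
    have h2 : ∑ j, y j = y i + ∑ j ∈ Finset.univ \ {i}, y j :=
      Finset.sum_eq_add_sum_sdiff_singleton_of_mem (Finset.mem_univ i) y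
    beta_reduce at *
    omega
  · intro x hx
    obtain ⟨hx1, hx2⟩ := Finset.mem_filter.mp hx
    funext j
    rcases eq_or_ne j i with rfl | hj
    · simp [Function.update_self]; omega
    · simp [Function.update_of_ne hj]
  · intro y hy
    funext j
    rcases eq_or_ne j i with rfl | hj
    · simp [Function.update_self]
    · simp [Function.update_of_ne hj]

set_option maxHeartbeats 1600000 in
theorem polya_lower_tail_exp_bound (N k : ℕ) (hN : 1 ≤ N) (hk : 8 * N ≤ k) (i : Fin N)
    (v : ℕ) (hv : (v : ℝ) ≤ (k : ℝ) / 2) :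
    urnProb N k (fun x => x i ≤ v) ≤
      Real.exp (-(1 / 64 * Real.exp (-(2 * (N : ℝ) * v) / k))) := by
  have hk8 : 8 ≤ k := le_trans (by omega) hk
  have h2v : 2 * v ≤ k := by
    have : ((2 * v : ℕ) : ℝ) ≤ (k : ℝ) := by push_cast; linarith
    exact_mod_cast this
  have hvk : v + 1 ≤ k := by omega
  have hvle : v ≤ k := by omega
  have hm1 : (k - (v + 1)) + 1 = k - v := by omega
  have hsub : k - (v + 1) ≤ k := Nat.sub_le _ _
  have hkpos : 0 < k := by omega
  set r := N - 1 with hr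
  set K := (k : ℝ) with hK
  set V := (v : ℝ) with hV
  clear_value r K V
  have hKpos : (0 : ℝ) < K := by rw [hK]; exact_mod_cast hkpos
  have hK8 : (8 : ℝ) ≤ K := by rw [hK]; exact_mod_cast hk8
  have hNK : 8 * (N : ℝ) ≤ K := by
    rw [hK]
    have : ((8 * N : ℕ) : ℝ) ≤ ((k : ℕ) : ℝ) := by exact_mod_cast hk
    push_cast at this
    linarith
  have hVnn : (0 : ℝ) ≤ V := by rw [hV]; positivity
  have hN1 : (1 : ℝ) ≤ (N : ℝ) := by exact_mod_cast hN
  have hrN : (r : ℝ) = (N : ℝ) - 1 := by rw [hr, Nat.cast_sub hN]; norm_num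
  -- cardinalities
  have ha : (urnSet N k).card = (k + r).choose r := by
    rw [hr]; exact card_urnSet' N k hN
  have hb : (urnSet N (k - (v + 1))).card = ((k - (v + 1)) + r).choose r := by
    rw [hr]; exact card_urnSet' N (k - (v + 1)) hN
  have hfilter := card_filter_ge N k (v + 1) hvk i
  have hnot : (Finset.filter (fun a => ¬ a i ≤ v) (urnSet N k)).card
      = (Finset.filter (fun x => v + 1 ≤ x i) (urnSet N k)).card := by
    congr 1
    apply Finset.filter_congr
    intro x _
    simp only [not_le]
    exact Iff.rfl
  have hsplit : (((urnSet N k).filter fun x => x i ≤ v)).card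
      + (((urnSet N k).filter fun x => v + 1 ≤ x i)).card = (urnSet N k).card := by
    rw [← hnot]
    exact Finset.card_filter_add_card_filter_not (s := urnSet N k)
      (p := fun x => x i ≤ v)
  set A := ((urnSet N k).card : ℝ) with hA
  set B := ((urnSet N (k - (v + 1))).card : ℝ) with hB
  clear_value A B
  have hApos : (0 : ℝ) < A := by
    rw [hA, ha]
    exact_mod_cast Nat.choose_pos (Nat.le_add_left r k)
  have hBpos : (0 : ℝ) < B := by
    rw [hB, hb]
    exact_mod_cast Nat.choose_pos (Nat.le_add_left r _)
  have hcardp : ((((urnSet N k).filter fun x => x i ≤ v)).card : ℝ) = A - B := by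
    have h1 : ((((urnSet N k).filter fun x => x i ≤ v)).card : ℝ)
        + ((((urnSet N k).filter fun x => v + 1 ≤ x i)).card : ℝ) = A := by
      rw [hA]; exact_mod_cast hsplit
    have h2 : ((((urnSet N k).filter fun x => v + 1 ≤ x i)).card : ℝ) = B := by
      rw [hB]; exact_mod_cast hfilter
    linarith
  -- the ratio bound via binomial coefficients
  have hratio := choose_ratio_aux r (k - (v + 1)) k hsub
  rw [hm1] at hratio
  have hKV : ((k - v : ℕ) : ℝ) = (k : ℝ) - (v : ℝ) := Nat.cast_sub hvle
  have hcast : A * (K - V) ^ r ≤ B * (K + 1) ^ r := by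
    rw [hA, hB, hK, hV, ha, hb, ← hKV]
    exact_mod_cast hratio
  have hKVhalf : K / 2 ≤ K - V := by linarith
  have hKVpos : (0 : ℝ) < K - V := by linarith
  have hfrac : ((K - V) / (K + 1)) ^ r ≤ B / A := by
    rw [div_pow, div_le_div_iff₀ (by positivity) hApos]
    calc (K - V) ^ r * A = A * (K - V) ^ r := by ring
      _ ≤ B * (K + 1) ^ r := hcast
  -- analytic bounds
  set t := (V + 1) / (K - V) with ht
  clear_value t
  have ht0 : 0 ≤ t := by rw [ht]; positivity
  have htprod : t * (K - V) = V + 1 := by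
    rw [ht]; field_simp
  have he : 1 + t ≤ Real.exp t := by
    have := Real.add_one_le_exp t; linarith
  have h1tpos : (0 : ℝ) < 1 + t := by linarith
  have hexp1 : Real.exp (-t) ≤ (K - V) / (K + 1) := by
    rw [Real.exp_neg]
    have hinv : (Real.exp t)⁻¹ ≤ (1 + t)⁻¹ := by
      apply inv_anti₀ h1tpos he
    have e : 1 + t = (K + 1) / (K - V) := by
      rw [ht]; field_simp; ring
    have h1t : (1 + t)⁻¹ = (K - V) / (K + 1) := by
      rw [e, inv_div]
    rw [← h1t]
    exact hinv
  have hexp2 : Real.exp (-((r : ℝ) * t)) ≤ ((K - V) / (K + 1)) ^ r := by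
    rw [show -((r : ℝ) * t) = (r : ℝ) * (-t) by ring, Real.exp_nat_mul]
    exact pow_le_pow_left₀ (Real.exp_nonneg _) hexp1 r
  have hrt : (r : ℝ) * t ≤ 1 / 4 + 2 * (N : ℝ) * V / K := by
    have htK : t * K ≤ 2 * (V + 1) := by
      have h := mul_le_mul_of_nonneg_left hKVhalf ht0
      nlinarith
    have hNnn : (0 : ℝ) ≤ (N : ℝ) - 1 := by linarith
    have hrtK : (r : ℝ) * t * K ≤ ((N : ℝ) - 1) * (2 * (V + 1)) := by
      rw [hrN]
      have h2 := mul_le_mul_of_nonneg_left htK hNnn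
      nlinarith [h2]
    have hfinal : (r : ℝ) * t * K ≤ K / 4 + 2 * (N : ℝ) * V := by nlinarith
    rw [← sub_nonneg]
    have expand : 1 / 4 + 2 * (N : ℝ) * V / K - (r : ℝ) * t
        = (K / 4 + 2 * (N : ℝ) * V - (r : ℝ) * t * K) / K := by
      field_simp
    rw [expand]
    exact div_nonneg (by linarith) (le_of_lt hKpos)
  have hc64 : 1 / 64 * Real.exp (-(2 * (N : ℝ) * V) / K) ≤ Real.exp (-((r : ℝ) * t)) := by
    have h164 : (1 / 64 : ℝ) ≤ Real.exp (-(1 / 4)) := by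
      have := Real.add_one_le_exp (-(1 / 4) : ℝ); linarith
    calc 1 / 64 * Real.exp (-(2 * (N : ℝ) * V) / K)
        ≤ Real.exp (-(1 / 4)) * Real.exp (-(2 * (N : ℝ) * V) / K) :=
          mul_le_mul_of_nonneg_right h164 (Real.exp_nonneg _)
      _ = Real.exp (-(1 / 4) + -(2 * (N : ℝ) * V) / K) := by rw [← Real.exp_add]
      _ ≤ Real.exp (-((r : ℝ) * t)) := by
          apply Real.exp_le_exp.mpr
          have hdiv : -(2 * (N : ℝ) * V) / K = -(2 * (N : ℝ) * V / K) := by ring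
          rw [hdiv]
          linarith
  set c := 1 / 64 * Real.exp (-(2 * (N : ℝ) * V) / K) with hc
  clear_value c
  have hcB : c ≤ B / A := le_trans (le_trans hc64 hexp2) hfrac
  have hfin : urnProb N k (fun x => x i ≤ v) ≤ 1 - c := by
    have hurn : urnProb N k (fun x => x i ≤ v)
        = ((Finset.filter (fun x => x i ≤ v) (urnSet N k)).card : ℝ)
          / (((urnSet N k).card : ℕ) : ℝ) := by
      rw [urnProb]; congr!
    rw [hurn, hcardp, ← hA, div_le_iff₀ hApos]
    have hBA : c * A ≤ B := (le_div_iff₀ hApos).mp hcB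
    nlinarith
  calc urnProb N k (fun x => x i ≤ v) ≤ 1 - c := hfin
    _ ≤ Real.exp (-c) := by
        have := Real.add_one_le_exp (-c); linarith
end
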